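/- For s ≤ l − t and (i,j) ≠ (0,0) with 0 ≤ i ≤ t, 0 ≤ j ≤ s: the coefficient a_{t,i}(q) q^{(l−2i−s+j)j} [s−j+i choose i]_q [t−i+j choose j]_q lies in q A_0 (has strictly positive minimal degree at q = 0). -/

import Mathlib

noncomputable section

/-- The field `ℚ(q)` of rational functions. -/
abbrev K : Type := RatFunc ℚ

/-- The indeterminate `q`. -/
def q : K := RatFunc.X

/-- The balanced quantum integer `[k] = (q^k - q^{-k})/(q - q⁻¹)`. -/
def qint (k : ℤ) : K := (q ^ k - q ^ (-k)) / (q - q⁻¹)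

/-- The quantum factorial `[k]! = [1][2]⋯[k]`. -/
def qfact : ℕ → K
  | 0 => 1
  | k + 1 => qfact k * qint ((k : ℤ) + 1)

/-- The Gaussian binomial coefficient `[c choose d] = [c]!/([c-d]![d]!)` for `c ≥ d ≥ 0`,
and `0` otherwise. -/
def qbinom (c d : ℤ) : K :=
  if d ≤ c ∧ 0 ≤ d then qfact c.toNat / (qfact (c - d).toNat * qfact d.toNat) else 0

/-- The coefficient `a_{t,i}(q) = ∏_{0 ≤ j' ≤ i−1} q^{l−t+1}/(q^{2(l−j')} − 1)`,
with `a_{t,0} = 1`. -/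
def att (l t i : ℕ) : K :=
  ∏ j ∈ Finset.range i, q ^ ((l : ℤ) - t + 1) / (q ^ (2 * ((l : ℤ) - j)) - 1)

/-- `A₀ ⊂ ℚ(q)`: the subring of rational functions regular at `q = 0`. -/
def inA0 (f : K) : Prop :=
  ∃ p r : Polynomial ℚ, r.coeff 0 ≠ 0 ∧
    f = algebraMap (Polynomial ℚ) K p / algebraMap (Polynomial ℚ) K r

/-! Every factor is `q ^ n` times a unit of `A₀`, so orders at `q = 0` simply add up. Since
`[k] = q ^ (1 - k) (q ^ (2k) - 1) / (q ^ 2 - 1)`, the factorial `[k]!` has order `-(0 + ⋯ + (k-1))`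
and `[a + b choose b]` has order `-ab`; `a_{t,i}` has order `i (l - t + 1)`. The coefficient
therefore has order `(i + j)(l - s - t) + i + j²`, which is positive unless `i = j = 0`. -/

open Polynomial

lemma q_ne_zero : q ≠ 0 := RatFunc.X_ne_zero

def IsUnitA0 (u : K) : Prop :=
  ∃ p r : ℚ[X], p.coeff 0 ≠ 0 ∧ r.coeff 0 ≠ 0 ∧
    u = algebraMap ℚ[X] K p / algebraMap ℚ[X] K r

namespace IsUnitA0

lemma one : IsUnitA0 1 := ⟨1, 1, by simp, by simp, by simp⟩

lemma mul {u v : K} (hu : IsUnitA0 u) (hv : IsUnitA0 v) : IsUnitA0 (u * v) := by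
  obtain ⟨p, r, hp, hr, rfl⟩ := hu
  obtain ⟨p', r', hp', hr', rfl⟩ := hv
  refine ⟨p * p', r * r', ?_, ?_, ?_⟩
  · simpa [mul_coeff_zero] using mul_ne_zero hp hp'
  · simpa [mul_coeff_zero] using mul_ne_zero hr hr'
  · rw [map_mul, map_mul, div_mul_div_comm]

lemma inv {u : K} (hu : IsUnitA0 u) : IsUnitA0 u⁻¹ := by
  obtain ⟨p, r, hp, hr, rfl⟩ := hu
  exact ⟨r, p, hr, hp, inv_div _ _⟩

lemma div {u v : K} (hu : IsUnitA0 u) (hv : IsUnitA0 v) : IsUnitA0 (u / v) :=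
  div_eq_mul_inv u v ▸ hu.mul hv.inv

lemma ne_zero {u : K} (hu : IsUnitA0 u) : u ≠ 0 := by
  obtain ⟨p, r, hp, hr, rfl⟩ := hu
  exact div_ne_zero (RatFunc.algebraMap_ne_zero (by rintro rfl; simp at hp))
    (RatFunc.algebraMap_ne_zero (by rintro rfl; simp at hr))

end IsUnitA0

lemma isUnitA0_zpow_sub_one {m : ℤ} (hm : 0 < m) : IsUnitA0 (q ^ m - 1) := by
  lift m to ℕ using hm.le
  refine ⟨X ^ m - 1, 1, ?_, by simp, ?_⟩
  · simp [coeff_X_pow, show 0 ≠ m by omega]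
  · simp [q, RatFunc.algebraMap_X]

lemma inA0_zpow_mul {n : ℤ} {u : K} (hn : 0 ≤ n) (hu : IsUnitA0 u) : inA0 (q ^ n * u) := by
  lift n to ℕ using hn
  obtain ⟨p, r, -, hr, rfl⟩ := hu
  refine ⟨X ^ n * p, r, hr, ?_⟩
  rw [map_mul, map_pow, RatFunc.algebraMap_X, zpow_natCast, mul_div_assoc]
  rfl

def HasOrderAtZero (n : ℤ) (f : K) : Prop :=
  ∃ u, IsUnitA0 u ∧ f = q ^ n * u

lemma hasOrderAtZero_zpow (n : ℤ) : HasOrderAtZero n (q ^ n) := ⟨1, .one, (mul_one _).symm⟩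

lemma IsUnitA0.hasOrderAtZero {u : K} (hu : IsUnitA0 u) : HasOrderAtZero 0 u :=
  ⟨u, hu, by rw [zpow_zero, one_mul]⟩

namespace HasOrderAtZero

lemma mul {m n : ℤ} {f g : K} (hf : HasOrderAtZero m f) (hg : HasOrderAtZero n g) :
    HasOrderAtZero (m + n) (f * g) := by
  obtain ⟨u, hu, rfl⟩ := hf
  obtain ⟨v, hv, rfl⟩ := hg
  exact ⟨u * v, hu.mul hv, by rw [zpow_add₀ q_ne_zero]; ring⟩

lemma inv {n : ℤ} {f : K} (hf : HasOrderAtZero n f) : HasOrderAtZero (-n) f⁻¹ := by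
  obtain ⟨u, hu, rfl⟩ := hf
  exact ⟨u⁻¹, hu.inv, by rw [mul_inv, zpow_neg]⟩

lemma div {m n : ℤ} {f g : K} (hf : HasOrderAtZero m f) (hg : HasOrderAtZero n g) :
    HasOrderAtZero (m - n) (f / g) := by
  simpa only [div_eq_mul_inv, sub_eq_add_neg] using hf.mul hg.inv

lemma prod {ι : Type*} (s : Finset ι) {n : ι → ℤ} {f : ι → K}
    (hf : ∀ i ∈ s, HasOrderAtZero (n i) (f i)) :
    HasOrderAtZero (∑ i ∈ s, n i) (∏ i ∈ s, f i) := by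
  classical
  induction s using Finset.induction_on with
  | empty => simpa using IsUnitA0.one.hasOrderAtZero
  | insert a s ha ih =>
    rw [Finset.sum_insert ha, Finset.prod_insert ha]
    exact (hf a (Finset.mem_insert_self a s)).mul
      (ih fun i hi => hf i (Finset.mem_insert_of_mem hi))

lemma exists_eq_q_mul {n : ℤ} {f : K} (hf : HasOrderAtZero n f) (hn : 1 ≤ n) :
    ∃ h, inA0 h ∧ f = q * h := by
  obtain ⟨u, hu, rfl⟩ := hf
  refine ⟨q ^ (n - 1) * u, inA0_zpow_mul (by omega) hu, ?_⟩
  rw [← mul_assoc, ← zpow_one_add₀ q_ne_zero, add_sub_cancel]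

end HasOrderAtZero

lemma qint_eq (k : ℤ) : qint k = q ^ (1 - k) * ((q ^ (2 * k) - 1) / (q ^ (2 : ℤ) - 1)) := by
  have hq2 := (isUnitA0_zpow_sub_one (m := 2) (by norm_num)).ne_zero
  have hq := q_ne_zero
  rw [qint, show 1 - k = 1 + -k by ring, zpow_add₀ q_ne_zero, zpow_neg, zpow_one, mul_comm 2 k,
    zpow_mul]
  norm_cast at hq2 ⊢
  have hq2' : q - q⁻¹ ≠ 0 := by
    contrapose! hq2
    calc q ^ 2 - 1 = q * (q - q⁻¹) := by field_simp
      _ = 0 := by rw [hq2, mul_zero]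
  field_simp

lemma hasOrderAtZero_qint {k : ℤ} (hk : 0 < k) : HasOrderAtZero (1 - k) (qint k) := by
  rw [qint_eq]
  simpa using (hasOrderAtZero_zpow (1 - k)).mul
    ((isUnitA0_zpow_sub_one (m := 2 * k) (by omega)).div
      (isUnitA0_zpow_sub_one (m := 2) (by norm_num))).hasOrderAtZero

lemma qfact_eq_prod (k : ℕ) : qfact k = ∏ m ∈ Finset.range k, qint ((m : ℤ) + 1) := by
  induction k with
  | zero => rfl
  | succ k ih => rw [Finset.prod_range_succ, ← ih, qfact]

lemma hasOrderAtZero_qfact (k : ℕ) :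
    HasOrderAtZero (-∑ m ∈ Finset.range k, (m : ℤ)) (qfact k) := by
  rw [qfact_eq_prod, ← Finset.sum_neg_distrib]
  refine HasOrderAtZero.prod _ fun m _ => ?_
  simpa using hasOrderAtZero_qint (k := (m : ℤ) + 1) (by omega)

lemma hasOrderAtZero_qbinom {c d : ℤ} (hd : 0 ≤ d) (hdc : d ≤ c) :
    HasOrderAtZero (-((c - d) * d)) (qbinom c d) := by
  lift d to ℕ using hd
  obtain ⟨a, rfl⟩ : ∃ a : ℕ, c = a + d := ⟨(c - d).toNat, by omega⟩
  have key := (hasOrderAtZero_qfact (a + d)).div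
    ((hasOrderAtZero_qfact a).mul (hasOrderAtZero_qfact d))
  rw [qbinom, if_pos ⟨by omega, by omega⟩, add_sub_cancel_right, ← Nat.cast_add]
  simp only [Int.toNat_natCast]
  convert key using 1
  rw [Finset.sum_range_add]
  push_cast
  rw [Finset.sum_add_distrib]
  simp only [Finset.sum_const, Finset.card_range, nsmul_eq_mul]
  ring

lemma hasOrderAtZero_att {l i : ℕ} (t : ℕ) (hil : i ≤ l) :
    HasOrderAtZero (i * ((l : ℤ) - t + 1)) (att l t i) := by
  have := HasOrderAtZero.prod (Finset.range i) (n := fun _ => (l : ℤ) - t + 1) fun j hj => by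
    simpa using (hasOrderAtZero_zpow ((l : ℤ) - t + 1)).div
      (isUnitA0_zpow_sub_one (m := 2 * ((l : ℤ) - j)) (by simp at hj; omega)).hasOrderAtZero
  simpa [att] using this

theorem coefficient_in_qA0_general (l t s i j : ℕ) (hs : s + t ≤ l)
    (hi : i ≤ t) (hj : j ≤ s) (hij : ¬(i = 0 ∧ j = 0)) :
    ∃ h : K, inA0 h ∧
      att l t i * q ^ (((l : ℤ) - 2 * i - s + j) * j) *
          qbinom ((s : ℤ) - j + i) (i : ℤ) * qbinom ((t : ℤ) - i + j) (j : ℤ)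
        = q * h := by
  have hord := (((hasOrderAtZero_att t (by omega : i ≤ l)).mul
    (hasOrderAtZero_zpow (((l : ℤ) - 2 * i - s + j) * j))).mul
    (hasOrderAtZero_qbinom (c := (s : ℤ) - j + i) (d := i) (by omega) (by omega))).mul
    (hasOrderAtZero_qbinom (c := (t : ℤ) - i + j) (d := j) (by omega) (by omega))
  refine hord.exists_eq_q_mul ?_
  have hgap : (0 : ℤ) ≤ l - s - t := by omega
  have hpos : 1 ≤ i + j * j := by have := Nat.le_mul_self j; omega
  calc (1 : ℤ) ≤ (i + j) * (l - s - t) + (i + j * j) := by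
        nlinarith [(by exact_mod_cast hpos : (1 : ℤ) ≤ i + j * j)]
    _ = _ := by ring

/-- For `0 ≤ t ≤ l`, `0 ≤ s ≤ l − t`, and `(i,j) ≠ (0,0)` with `0 ≤ i ≤ t`, `0 ≤ j ≤ s`,
the coefficient `a_{t,i}(q) q^{(l−2i−s+j)j} [s−j+i choose i] [t−i+j choose j]` lies in
`q A₀`. -/
theorem coefficient_in_qA0 (l t s i j : ℕ) (ht : t ≤ l) (hs : s + t ≤ l)
    (hi : i ≤ t) (hj : j ≤ s) (hij : ¬(i = 0 ∧ j = 0)) :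
    ∃ h : K, inA0 h ∧
      att l t i * q ^ (((l : ℤ) - 2 * i - s + j) * j) *
          qbinom ((s : ℤ) - j + i) (i : ℤ) * qbinom ((t : ℤ) - i + j) (j : ℤ)
        = q * h :=
  coefficient_in_qA0_general l t s i j hs hi hj hij

end
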